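/- arXiv:0801.0455 — 5 statements merged into one kernel-verified Lean document; each statement's English description precedes it below -/
import Mathlib

section
/- Duality between min-plus convolution and deconvolution: for functions f, g, h on ℝ≥0, f ≤ g ∗ h (pointwise) if and only if h ≥ f ⊘ g (pointwise), where (g ∗ h)(t) = inf_{0 ≤ τ ≤ t}(g(τ)+h(t−τ)) and (f ⊘ g)(t) = sup_{τ ≥ 0}(f(t+τ) − g(τ)). -/
open ENNReal

/-- Min-plus convolution of `ℝ≥0∞`-valued functions on the nonnegative reals. -/
noncomputable def mpConv (f g : ℝ → ℝ≥0∞) (t : ℝ) : ℝ≥0∞ :=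
  ⨅ τ ∈ Set.Icc (0 : ℝ) t, f τ + g (t - τ)

/-- Min-plus deconvolution. -/
noncomputable def mpDeconv (f g : ℝ → ℝ≥0∞) (t : ℝ) : ℝ≥0∞ :=
  ⨆ τ ∈ Set.Ici (0 : ℝ), f (t + τ) - g τ

/-- Legendre transform (rate domain) of an `ℝ≥0∞`-valued function. -/
noncomputable def legendre (f : ℝ → ℝ≥0∞) (r : ℝ) : ℝ≥0∞ :=
  ⨆ τ ∈ Set.Ici (0 : ℝ), ENNReal.ofReal (r * τ) - f τ

/-- Legendre transform of a real-valued function (truncated at 0). -/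
noncomputable def legendreR (f : ℝ → ℝ) (r : ℝ) : ℝ≥0∞ :=
  ⨆ τ ∈ Set.Ici (0 : ℝ), ENNReal.ofReal (r * τ - f τ)

/-- duality between min-plus convolution and deconvolution:
`f ≤ g ∗ h` pointwise iff `h ≥ f ⊘ g` pointwise. -/
theorem mpConv_mpDeconv_duality (f g h : ℝ → ℝ≥0∞)
    (hf : MonotoneOn f (Set.Ici 0)) (hg : MonotoneOn g (Set.Ici 0))
    (hh : MonotoneOn h (Set.Ici 0))
    (hf0 : f 0 = 0) (hg0 : g 0 = 0) (hh0 : h 0 = 0) :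
    (∀ t ≥ (0 : ℝ), f t ≤ mpConv g h t) ↔ (∀ t ≥ (0 : ℝ), mpDeconv f g t ≤ h t) := by
  constructor
  · intro H t ht
    rw [mpDeconv]
    refine iSup₂_le fun τ hτ => ?_
    have hτ0 : (0:ℝ) ≤ τ := hτ
    rw [tsub_le_iff_right]
    have h1 := H (t + τ) (by linarith)
    refine h1.trans ?_
    have : mpConv g h (t + τ) ≤ g τ + h (t + τ - τ) := by
      refine biInf_le _ ?_
      exact Set.mem_Icc.mpr ⟨hτ0, by linarith⟩
    simpa [add_comm] using this
  · intro H t ht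
    rw [mpConv]
    refine le_iInf₂ fun τ hτ => ?_
    obtain ⟨hτ0, hτt⟩ := hτ
    have h1 := H (t - τ) (by linarith)
    have h2 : f ((t - τ) + τ) - g τ ≤ mpDeconv f g (t - τ) := by
      exact le_biSup (fun σ => f ((t - τ) + σ) - g σ) hτ0
    have h3 : f t - g τ ≤ h (t - τ) := by
      simpa using h2.trans h1
    rw [tsub_le_iff_right] at h3
    calc f t ≤ h (t - τ) + g τ := h3
      _ = g τ + h (t - τ) := add_comm _ _
end

section
/- Composition lemma for deconvolution: for nonnegative nondecreasing functions g and h with g(0)=h(0)=0, ((h ∗ g) ⊘ g) ∗ g = h ∗ g, where ∗ is min-plus convolution and ⊘ is min-plus deconvolution. -/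
open ENNReal

lemma mpConv_le_split (f g : ℝ → ℝ≥0∞) {t τ : ℝ} (hτ : τ ∈ Set.Icc (0 : ℝ) t) :
    mpConv f g t ≤ f τ + g (t - τ) :=
  iInf₂_le τ hτ

lemma le_mpConv {c : ℝ≥0∞} {f g : ℝ → ℝ≥0∞} {t : ℝ}
    (H : ∀ τ ∈ Set.Icc (0 : ℝ) t, c ≤ f τ + g (t - τ)) : c ≤ mpConv f g t :=
  le_iInf₂ H

lemma le_mpDeconv (f g : ℝ → ℝ≥0∞) {t τ : ℝ} (hτ : τ ∈ Set.Ici (0 : ℝ)) :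
    f (t + τ) - g τ ≤ mpDeconv f g t :=
  le_iSup₂ (f := fun σ (_ : σ ∈ Set.Ici (0 : ℝ)) => f (t + σ) - g σ) τ hτ

lemma mpDeconv_le {c : ℝ≥0∞} {f g : ℝ → ℝ≥0∞} {t : ℝ}
    (H : ∀ τ ∈ Set.Ici (0 : ℝ), f (t + τ) - g τ ≤ c) : mpDeconv f g t ≤ c :=
  iSup₂_le H

/-- composition lemma: `((h ∗ g) ⊘ g) ∗ g = h ∗ g`. -/
theorem mpDeconv_composition (g h : ℝ → ℝ≥0∞)
    (hg : MonotoneOn g (Set.Ici 0)) (hh : MonotoneOn h (Set.Ici 0))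
    (hg0 : g 0 = 0) (hh0 : h 0 = 0) :
    ∀ t ≥ (0 : ℝ), mpConv (mpDeconv (mpConv h g) g) g t = mpConv h g t := by
  intro t ht
  apply le_antisymm
  · refine le_mpConv fun u hu => ?_
    refine le_trans (mpConv_le_split _ _ hu) (add_le_add_left ?_ _)
    refine mpDeconv_le fun s hs => ?_
    rw [tsub_le_iff_right]
    have : mpConv h g (u + s) ≤ h u + g (u + s - u) :=
      mpConv_le_split h g ⟨hu.1, by simp [Set.mem_Ici] at hs; linarith [hu.2]⟩
    simpa using this
  · refine le_mpConv fun τ hτ => ?_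
    calc mpConv h g t ≤ (mpConv h g t - g (t - τ)) + g (t - τ) := le_tsub_add
      _ ≤ mpDeconv (mpConv h g) g τ + g (t - τ) := by
          refine add_le_add_left ?_ _
          have := le_mpDeconv (mpConv h g) g (t := τ) (τ := t - τ)
            (by simp [Set.mem_Ici]; linarith [hτ.2])
          simpa using this
end

section
/- If a system satisfies D = A ∗ S (min-plus convolution) for arrival A and departure D, and we set S̃ = D ⊘ A (min-plus deconvolution), then S̃ ≤ S and D = A ∗ S̃. -/
open ENNReal

/-- if `D = A ∗ S` and `S' = D ⊘ A`, then `S' ≤ S` and `D = A ∗ S'`. -/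
theorem deconv_service_curve (A D S : ℝ → ℝ≥0∞)
    (hA : MonotoneOn A (Set.Ici 0)) (hD : MonotoneOn D (Set.Ici 0))
    (hS : MonotoneOn S (Set.Ici 0))
    (hA0 : A 0 = 0) (hD0 : D 0 = 0) (hS0 : S 0 = 0)
    (hlin : ∀ t ≥ (0 : ℝ), D t = mpConv A S t) :
    (∀ t ≥ (0 : ℝ), mpDeconv D A t ≤ S t) ∧
    (∀ t ≥ (0 : ℝ), D t = mpConv A (mpDeconv D A) t) := by
  have h1 : ∀ t ≥ (0 : ℝ), mpDeconv D A t ≤ S t := by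
    intro t ht
    apply iSup₂_le
    intro τ hτ
    rw [tsub_le_iff_right]
    rw [hlin (t + τ) (by simp at hτ; linarith)]
    have : mpConv A S (t + τ) ≤ A τ + S (t + τ - τ) :=
      iInf₂_le τ ⟨by simpa using hτ, by simp at hτ ⊢; linarith⟩
    simpa [add_comm] using this
  refine ⟨h1, fun t ht => ?_⟩
  apply le_antisymm
  · apply le_iInf₂
    rintro τ ⟨hτ0, hτt⟩
    have key : D t - A τ ≤ mpDeconv D A (t - τ) := by
      have := le_iSup₂ (f := fun σ (_ : σ ∈ Set.Ici (0:ℝ)) => D (t - τ + σ) - A σ) τ hτ0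
      simpa [mpDeconv] using this
    calc D t ≤ A τ + (D t - A τ) := le_add_tsub
      _ ≤ A τ + mpDeconv D A (t - τ) := by gcongr
  · rw [hlin t ht]
    apply le_iInf₂
    rintro τ ⟨hτ0, hτt⟩
    calc mpConv A (mpDeconv D A) t ≤ A τ + mpDeconv D A (t - τ) :=
          iInf₂_le τ ⟨hτ0, hτt⟩
      _ ≤ A τ + S (t - τ) := by gcongr; exact h1 _ (by linarith)
end

section
/- In a min-plus linear system with service curve S and constant-rate input A(t) = r·t, the maximum backlog equals the Legendre transform of S at r: sup_{t ≥ 0}(A(t) − D(t)) = sup_{t ≥ 0}(r·t − S(t)) = L_S(r), where D = A ∗ S. -/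
open ENNReal

/-- for constant-rate input `A t = r * t` into a min-plus linear system with
service curve `S`, the maximum backlog `sup_t (A t - D t)` (with `D = A ∗ S`) equals `L_S r`. -/
theorem max_backlog_eq_legendre (S : ℝ → ℝ≥0∞)
    (hS : MonotoneOn S (Set.Ici 0)) (hS0 : S 0 = 0)
    (r : ℝ) (hr : 0 ≤ r) :
    (⨆ t ∈ Set.Ici (0 : ℝ),
        ENNReal.ofReal (r * t) - mpConv (fun τ => ENNReal.ofReal (r * τ)) S t)
      = legendre S r := by
  apply le_antisymm
  · refine iSup₂_le fun t ht => ?_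
    have hne : Nonempty (Set.Icc (0:ℝ) t) := ⟨⟨0, le_refl 0, ht⟩⟩
    rw [mpConv, iInf_subtype', ENNReal.sub_iInf]
    refine iSup_le fun τ => ?_
    obtain ⟨τ, hτ0, hτt⟩ := τ
    have h1 : ENNReal.ofReal (r * t) - (ENNReal.ofReal (r * τ) + S (t - τ))
        = ENNReal.ofReal (r * (t - τ)) - S (t - τ) := by
      rw [tsub_add_eq_tsub_tsub, ← ENNReal.ofReal_sub _ (mul_nonneg hr hτ0), mul_sub]
    exact le_trans (le_of_eq h1)
      (le_iSup₂ (f := fun s (_ : s ∈ Set.Ici (0:ℝ)) => ENNReal.ofReal (r * s) - S s)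
        (t - τ) (sub_nonneg.2 hτt))
  · refine iSup₂_le fun s hs => ?_
    have hD : mpConv (fun τ => ENNReal.ofReal (r * τ)) S s ≤ S s := by
      have h := iInf₂_le (f := fun τ (_ : τ ∈ Set.Icc (0:ℝ) s) =>
        ENNReal.ofReal (r * τ) + S (s - τ)) 0 ⟨le_rfl, hs⟩
      simpa [mpConv] using h
    exact le_trans (tsub_le_tsub_left hD _)
      (le_iSup₂ (f := fun t (_ : t ∈ Set.Ici (0:ℝ)) =>
        ENNReal.ofReal (r * t) - mpConv (fun τ => ENNReal.ofReal (r * τ)) S t) s hs)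
end

section
/- Rate chirp identity: if D = A ∗ S (min-plus convolution) with S convex, nonnegative, nondecreasing, S(0) = 0, and L_A(r) < ∞ for all r ≥ 0, then S(t) = sup_{r ≥ 0}(rt − (L_D(r) − L_A(r))) for all t ≥ 0, i.e., S = L(L_D − L_A). -/
open ENNReal

/-- Supporting line for a convex monotone function on the half line. -/
lemma exists_support_slope (S : ℝ → ℝ) (hconv : ConvexOn ℝ (Set.Ici 0) S)
    (hmono : MonotoneOn S (Set.Ici 0)) (hS0 : S 0 = 0) {t : ℝ} (ht : 0 ≤ t) :
    ∃ r ≥ (0 : ℝ), ∀ τ ≥ (0 : ℝ), S t + r * (τ - t) ≤ S τ := by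
  have hSnn : ∀ τ ≥ (0 : ℝ), 0 ≤ S τ := fun τ hτ => hS0 ▸ hmono (Set.mem_Ici.mpr le_rfl) hτ hτ
  rcases eq_or_lt_of_le ht with h0 | hpos
  · refine ⟨0, le_rfl, fun τ hτ => ?_⟩
    simp [← h0, hS0]
    exact hSnn τ hτ
  · set E : Set ℝ := (fun u => (S u - S t) / (u - t)) '' Set.Ioi t with hE
    have hne : E.Nonempty := ⟨_, ⟨t + 1, by simp, rfl⟩⟩
    have hslope : ∀ u ∈ Set.Ioi t, (S t - S 0) / (t - 0) ≤ (S u - S t) / (u - t) := by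
      intro u hu
      exact hconv.slope_mono_adjacent (Set.mem_Ici.mpr le_rfl)
        (Set.mem_Ici.mpr (le_of_lt (lt_trans hpos hu))) hpos hu
    have hbdd : BddBelow E := by
      refine ⟨(S t - S 0) / (t - 0), ?_⟩
      rintro x ⟨u, hu, rfl⟩
      exact hslope u hu
    set r := sInf E with hr
    have hrnn : 0 ≤ r := by
      apply le_csInf hne
      rintro x ⟨u, hu, rfl⟩
      have : S t ≤ S u := hmono (le_of_lt hpos) (le_of_lt (lt_trans hpos hu)) (le_of_lt hu)
      have hut : 0 < u - t := by simp at hu; linarith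
      apply div_nonneg <;> linarith
    refine ⟨r, hrnn, fun τ hτ => ?_⟩
    rcases lt_trichotomy τ t with hlt | heq | hgt
    · -- τ < t : slope(τ,t) ≤ r
      have hslope2 : ∀ u ∈ Set.Ioi t, (S t - S τ) / (t - τ) ≤ (S u - S t) / (u - t) := by
        intro u hu
        exact hconv.slope_mono_adjacent (Set.mem_Ici.mpr hτ)
          (Set.mem_Ici.mpr (le_of_lt (lt_trans hpos hu))) hlt hu
      have h1 : (S t - S τ) / (t - τ) ≤ r := by
        apply le_csInf hne
        rintro x ⟨u, hu, rfl⟩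
        exact hslope2 u hu
      have htτ : 0 < t - τ := by linarith
      rw [div_le_iff₀ htτ] at h1
      nlinarith
    · simp [heq]
    · have h1 : r ≤ (S τ - S t) / (τ - t) := csInf_le hbdd ⟨τ, hgt, rfl⟩
      have hτt : 0 < τ - t := by linarith
      rw [le_div_iff₀ hτt] at h1
      linarith

/-- Legendre transform turns min-plus convolution into sum. -/
lemma legendre_mpConv (A : ℝ → ℝ≥0∞) (S : ℝ → ℝ) (hA0 : A 0 = 0) (hS0 : S 0 = 0)
    (D : ℝ → ℝ≥0∞)
    (hD : ∀ t ≥ (0 : ℝ), D t = mpConv A (fun τ => ENNReal.ofReal (S τ)) t)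
    {r : ℝ} (hr : 0 ≤ r) :
    legendre D r = legendre A r + legendre (fun τ => ENNReal.ofReal (S τ)) r := by
  set S' : ℝ → ℝ≥0∞ := fun τ => ENNReal.ofReal (S τ) with hS'
  have hS'0 : S' 0 = 0 := by simp [hS', hS0]
  apply le_antisymm
  · -- L_D ≤ L_A + L_S
    apply iSup₂_le
    intro t ht
    rw [hD t ht]
    show ENNReal.ofReal (r * t) - mpConv A S' t ≤ _
    rw [mpConv, ENNReal.sub_iInf]
    apply iSup_le; intro τ
    rw [ENNReal.sub_iInf]
    apply iSup_le; intro hτ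
    obtain ⟨hτ0, hτt⟩ := hτ
    have hsplit : ENNReal.ofReal (r * t) =
        ENNReal.ofReal (r * τ) + ENNReal.ofReal (r * (t - τ)) := by
      rw [← ENNReal.ofReal_add (by positivity) (mul_nonneg hr (by linarith))]
      ring_nf
    rw [hsplit]
    have key : ENNReal.ofReal (r * τ) + ENNReal.ofReal (r * (t - τ)) - (A τ + S' (t - τ)) ≤
        (ENNReal.ofReal (r * τ) - A τ) + (ENNReal.ofReal (r * (t - τ)) - S' (t - τ)) := by
      rw [tsub_le_iff_right]
      calc ENNReal.ofReal (r * τ) + ENNReal.ofReal (r * (t - τ))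
          ≤ (ENNReal.ofReal (r * τ) - A τ + A τ) +
            (ENNReal.ofReal (r * (t - τ)) - S' (t - τ) + S' (t - τ)) := by
            gcongr <;> exact le_tsub_add
        _ = _ := by ring
    refine key.trans ?_
    gcongr
    · exact le_iSup₂ (f := fun τ _ => ENNReal.ofReal (r * τ) - A τ) τ hτ0
    · exact le_iSup₂ (f := fun s _ => ENNReal.ofReal (r * s) - S' s) (t - τ)
        (by simp only [Set.mem_Ici]; linarith)
  · -- L_A + L_S ≤ L_D
    apply ENNReal.biSup_add_biSup_le (Set.nonempty_Ici) (Set.nonempty_Ici)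
    intro τ hτ s hs
    simp only [Set.mem_Ici] at hτ hs
    have hDle : ∀ u ≥ (0 : ℝ), ∀ v ∈ Set.Icc (0:ℝ) u, D u ≤ A v + S' (u - v) := by
      intro u hu v hv
      rw [hD u hu, mpConv]
      exact biInf_le _ hv
    have hterm : ∀ u ≥ (0:ℝ), ENNReal.ofReal (r * u) - D u ≤ legendre D r :=
      fun u hu => le_iSup₂ (f := fun u _ => ENNReal.ofReal (r * u) - D u) u hu
    rcases le_total (ENNReal.ofReal (r * τ)) (A τ) with hc1 | hc1
    · rw [tsub_eq_zero_of_le hc1, zero_add]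
      have h1 : D s ≤ S' s := by
        have := hDle s hs 0 ⟨le_rfl, hs⟩
        simpa [hA0] using this
      exact le_trans (tsub_le_tsub_left h1 _) (hterm s hs)
    · rcases le_total (ENNReal.ofReal (r * s)) (S' s) with hc2 | hc2
      · rw [tsub_eq_zero_of_le hc2, add_zero]
        have h1 : D τ ≤ A τ := by
          have := hDle τ hτ τ ⟨hτ, le_rfl⟩
          simpa [hS'0] using this
        exact le_trans (tsub_le_tsub_left h1 _) (hterm τ hτ)
      · have hts : (0:ℝ) ≤ τ + s := by linarith
        have h1 : D (τ + s) ≤ A τ + S' s := by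
          have := hDle (τ + s) hts τ ⟨hτ, by linarith⟩
          simpa using this
        have h2 : ENNReal.ofReal (r * τ) + ENNReal.ofReal (r * s) =
            ENNReal.ofReal (r * (τ + s)) := by
          rw [← ENNReal.ofReal_add (mul_nonneg hr hτ) (mul_nonneg hr hs)]
          ring_nf
        have h3 : (ENNReal.ofReal (r * τ) - A τ) + (ENNReal.ofReal (r * s) - S' s)
            + (A τ + S' s) = ENNReal.ofReal (r * τ) + ENNReal.ofReal (r * s) := by
          calc (ENNReal.ofReal (r * τ) - A τ) + (ENNReal.ofReal (r * s) - S' s)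
              + (A τ + S' s)
              = ((ENNReal.ofReal (r * τ) - A τ) + A τ) +
                ((ENNReal.ofReal (r * s) - S' s) + S' s) := by ring
            _ = _ := by rw [tsub_add_cancel_of_le hc1, tsub_add_cancel_of_le hc2]
        have h4 : (ENNReal.ofReal (r * τ) - A τ) + (ENNReal.ofReal (r * s) - S' s)
            ≤ ENNReal.ofReal (r * (τ + s)) - (A τ + S' s) := by
          have hne : A τ + S' s ≠ ⊤ := by
            apply ne_top_of_le_ne_top _ (add_le_add hc1 hc2)
            exact ENNReal.add_ne_top.2 ⟨ENNReal.ofReal_ne_top, ENNReal.ofReal_ne_top⟩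
          exact ENNReal.le_sub_of_add_le_right hne (by rw [h3, h2])
        exact h4.trans (le_trans (tsub_le_tsub_left h1 _) (hterm _ hts))

lemma legendre_congr (f g : ℝ → ℝ≥0∞) (h : ∀ r ≥ (0:ℝ), f r = g r) (t : ℝ) :
    legendre f t = legendre g t := by
  unfold legendre
  exact iSup_congr fun r => iSup_congr fun hr => by rw [h r hr]

/-- Biconjugation: the double Legendre transform recovers a convex function. -/
lemma legendre_legendre (S : ℝ → ℝ) (hconv : ConvexOn ℝ (Set.Ici 0) S)
    (hmono : MonotoneOn S (Set.Ici 0)) (hS0 : S 0 = 0) {t : ℝ} (ht : 0 ≤ t) :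
    legendre (fun r => legendre (fun τ => ENNReal.ofReal (S τ)) r) t
      = ENNReal.ofReal (S t) := by
  set S' : ℝ → ℝ≥0∞ := fun τ => ENNReal.ofReal (S τ) with hS'
  have hSnn : ∀ τ ≥ (0 : ℝ), 0 ≤ S τ := fun τ hτ => hS0 ▸ hmono (Set.mem_Ici.mpr le_rfl) hτ hτ
  apply le_antisymm
  · apply iSup₂_le
    intro r hr
    simp only [Set.mem_Ici] at hr
    have h1 : ENNReal.ofReal (r * t) - ENNReal.ofReal (S t) ≤ legendre S' r :=
      le_iSup₂ (f := fun τ _ => ENNReal.ofReal (r * τ) - S' τ) t ht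
    calc ENNReal.ofReal (t * r) - legendre S' r
        ≤ ENNReal.ofReal (t * r) - (ENNReal.ofReal (r * t) - ENNReal.ofReal (S t)) :=
          tsub_le_tsub_left h1 _
      _ ≤ ENNReal.ofReal (S t) := by
          rw [tsub_le_iff_right, mul_comm t r]
          exact le_trans le_tsub_add (by rw [add_comm])
  · obtain ⟨r, hr0, hsup⟩ := exists_support_slope S hconv hmono hS0 ht
    have hrtSt : S t ≤ r * t := by
      have := hsup 0 le_rfl
      rw [hS0] at this
      nlinarith
    have hLS : legendre S' r ≤ ENNReal.ofReal (r * t - S t) := by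
      apply iSup₂_le
      intro τ hτ
      simp only [Set.mem_Ici] at hτ
      rw [hS', ← ENNReal.ofReal_sub _ (hSnn τ hτ)]
      apply ENNReal.ofReal_le_ofReal
      have := hsup τ hτ
      nlinarith
    have key : ENNReal.ofReal (S t) ≤ ENNReal.ofReal (t * r) - legendre S' r := by
      calc ENNReal.ofReal (S t)
          = ENNReal.ofReal (t * r) - ENNReal.ofReal (r * t - S t) := by
            rw [← ENNReal.ofReal_sub _ (by linarith)]
            congr 1
            ring
        _ ≤ _ := tsub_le_tsub_left hLS _
    exact key.trans (le_iSup₂ (f := fun r _ => ENNReal.ofReal (t * r) - legendre S' r) r hr0)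

/-- rate chirp identity: if `D = A ∗ S` with `S` convex and `L_A` finite,
then `S = L(L_D - L_A)` on the nonnegative half-line. -/
theorem rate_chirp_identity (A : ℝ → ℝ≥0∞) (S : ℝ → ℝ)
    (hA : MonotoneOn A (Set.Ici 0)) (hA0 : A 0 = 0)
    (hconv : ConvexOn ℝ (Set.Ici 0) S) (hcont : ContinuousOn S (Set.Ici 0))
    (hmono : MonotoneOn S (Set.Ici 0)) (hnonneg : ∀ t ≥ (0 : ℝ), 0 ≤ S t)
    (hS0 : S 0 = 0)
    (D : ℝ → ℝ≥0∞)
    (hD : ∀ t ≥ (0 : ℝ), D t = mpConv A (fun τ => ENNReal.ofReal (S τ)) t)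
    (hfin : ∀ r ≥ (0 : ℝ), legendre A r ≠ ⊤) :
    ∀ t ≥ (0 : ℝ),
      legendre (fun r => legendre D r - legendre A r) t = ENNReal.ofReal (S t) := by
  intro t ht
  have hdiff : ∀ r ≥ (0 : ℝ), legendre D r - legendre A r
      = legendre (fun τ => ENNReal.ofReal (S τ)) r := by
    intro r hr
    rw [legendre_mpConv A S hA0 hS0 D hD hr, ENNReal.add_sub_cancel_left (hfin r hr)]
  rw [legendre_congr _ _ hdiff t]
  exact legendre_legendre S hconv hmono hS0 ht
end
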